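/- Let V be the span of the functions x ↦ e^{αⱼ x} pⱼ(x), j = 1,…,m, where αⱼ ∈ ℂ and pⱼ ∈ ℂ[x]ⁿ, and suppose these functions are linearly independent. If P(x,∂ₓ) is the unique monic first-order n×n matrix differential operator ∂ₓ − F′(x)F(x)⁻¹ annihilating the columns of an invertible matrix function F(x) whose columns are e^{αⱼx}pⱼ(x) (j = 1,…,n), then the coefficient matrix F′(x)F(x)⁻¹ has entries that are rational functions of x. -/

import Mathlib

open scoped BigOperators

/-- The `n×n` matrix function `F(x)` whose `j`-th column is `e^{αⱼ x} pⱼ(x)`,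
where `pⱼ ∈ ℂ[x]ⁿ` is a vector-valued polynomial (entry `i` is `p j i`). -/
noncomputable def quasiExpMat (n : ℕ) (al : Fin n → ℂ)
    (p : Fin n → Fin n → Polynomial ℂ) (x : ℂ) : Matrix (Fin n) (Fin n) ℂ :=
  Matrix.of fun i j => Complex.exp (al j * x) * (p j i).eval x

/-- The entrywise derivative `F′(x)` of `quasiExpMat`. -/
noncomputable def quasiExpMatDeriv (n : ℕ) (al : Fin n → ℂ)
    (p : Fin n → Fin n → Polynomial ℂ) (x : ℂ) : Matrix (Fin n) (Fin n) ℂ :=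
  Matrix.of fun i j => deriv (fun t => Complex.exp (al j * t) * (p j i).eval t) x

/-- If the columns `e^{αⱼ x} pⱼ(x)` of `F(x)` are linearly independent
functions and `det F(x)` is not identically zero, then every entry of the coefficient
matrix `F′(x) F(x)⁻¹` of the unique monic first-order operator `∂ₓ − F′(x)F(x)⁻¹`
annihilating the columns of `F` is a rational function of `x`: there are polynomials
`P`, `Q` with `Q ≠ 0` such that `(F′(x)F(x)⁻¹)ᵢⱼ · Q(x) = P(x)` wherever `F(x)` is
invertible. -/
theorem stmt13 (n : ℕ) (al : Fin n → ℂ) (p : Fin n → Fin n → Polynomial ℂ)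
    (hli : LinearIndependent ℂ
      (fun j => fun (x : ℂ) (i : Fin n) => Complex.exp (al j * x) * (p j i).eval x))
    (hdet : ∃ x : ℂ, (quasiExpMat n al p x).det ≠ 0) :
    ∀ i j : Fin n, ∃ P Q : Polynomial ℂ, Q ≠ 0 ∧
      ∀ x : ℂ, (quasiExpMat n al p x).det ≠ 0 →
        (quasiExpMatDeriv n al p x * (quasiExpMat n al p x)⁻¹) i j * Q.eval x
          = P.eval x := by
  intro i j
  set ev : ∀ x : ℂ, Polynomial ℂ →+* ℂ := fun x => Polynomial.evalRingHom x with hev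
  set Pm : Matrix (Fin n) (Fin n) (Polynomial ℂ) := Matrix.of fun a b => p b a with hPm
  set Hm : Matrix (Fin n) (Fin n) (Polynomial ℂ) :=
    Matrix.of fun a b => Polynomial.C (al b) * p b a + (p b a).derivative with hHm
  -- factorization F x = (Pm evaluated) * diagonal exponentials
  have hF : ∀ x : ℂ, quasiExpMat n al p x =
      (RingHom.mapMatrix (ev x)) Pm * Matrix.diagonal (fun b => Complex.exp (al b * x)) := by
    intro x
    ext a b
    simp [quasiExpMat, Matrix.mul_diagonal, hPm, hev, mul_comm]
  have hDdet : ∀ x : ℂ, (Matrix.diagonal (fun b => Complex.exp (al b * x))).det ≠ 0 := by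
    intro x
    rw [Matrix.det_diagonal]
    exact Finset.prod_ne_zero_iff.2 fun b _ => Complex.exp_ne_zero _
  refine ⟨(Hm * Pm.adjugate) i j, Pm.det, ?_, ?_⟩
  · obtain ⟨x0, hx0⟩ := hdet
    intro hQ
    apply hx0
    rw [hF x0, Matrix.det_mul, ← RingHom.map_det, hQ]
    simp
  · intro x hx
    have hGdet : ((RingHom.mapMatrix (ev x)) Pm).det ≠ 0 := by
      intro h
      apply hx
      rw [hF x, Matrix.det_mul, h, zero_mul]
    -- derivative factorization
    have hF' : quasiExpMatDeriv n al p x =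
        (RingHom.mapMatrix (ev x)) Hm * Matrix.diagonal (fun b => Complex.exp (al b * x)) := by
      ext a b
      have h1 : HasDerivAt (fun t : ℂ => Complex.exp (al b * t))
          (Complex.exp (al b * x) * (al b * 1)) x :=
        (((hasDerivAt_id x).const_mul (al b)).cexp)
      have h2 := (p b a).hasDerivAt x
      have h3 : deriv (fun t => Complex.exp (al b * t) * Polynomial.eval t (p b a)) x = _ :=
        (h1.mul h2).deriv
      simp only [quasiExpMatDeriv, Matrix.of_apply, Matrix.mul_diagonal]
      rw [h3]
      simp [hHm, hev]
      ring
    have hDinv : Matrix.diagonal (fun b => Complex.exp (al b * x)) *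
        (Matrix.diagonal (fun b => Complex.exp (al b * x)))⁻¹ = 1 :=
      Matrix.mul_nonsing_inv _ (Ne.isUnit (hDdet x))
    have key : quasiExpMatDeriv n al p x * (quasiExpMat n al p x)⁻¹
        = (RingHom.mapMatrix (ev x)) Hm * ((RingHom.mapMatrix (ev x)) Pm)⁻¹ := by
      rw [hF', hF x, Matrix.mul_inv_rev, Matrix.mul_assoc,
        ← Matrix.mul_assoc (Matrix.diagonal _), hDinv, Matrix.one_mul]
    rw [key]
    have hinv : ((RingHom.mapMatrix (ev x)) Pm)⁻¹
        = (((RingHom.mapMatrix (ev x)) Pm).det)⁻¹ • ((RingHom.mapMatrix (ev x)) Pm).adjugate := by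
      rw [Matrix.inv_def, Ring.inverse_eq_inv']
    rw [hinv, Matrix.mul_smul, Matrix.smul_apply, ← RingHom.map_adjugate, smul_eq_mul,
      ← map_mul]
    have hQev : Pm.det.eval x = ((RingHom.mapMatrix (ev x)) Pm).det := by
      rw [← RingHom.map_det]; rfl
    rw [hQev]
    have hent : ((RingHom.mapMatrix (ev x)) (Hm * Pm.adjugate)) i j
        = Polynomial.eval x ((Hm * Pm.adjugate) i j) := rfl
    rw [hent, mul_comm (((RingHom.mapMatrix (ev x)) Pm).det)⁻¹]
    exact inv_mul_cancel_right₀ hGdet _
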